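/- In the q-Onsager algebra B_c, the automorphism T_1 = Φ∘T_0∘Φ satisfies T_1(B_δ) = B̃_δ, where B_δ = −B_0B_1 + q^{-2}B_1B_0 and B̃_δ = −B_1B_0 + q^{-2}B_0B_1; consequently T_0T_1(B_δ) = B_δ. -/
import Mathlib


set_option synthInstance.maxHeartbeats 1000000
set_option maxHeartbeats 1000000

noncomputable section

open scoped BigOperators

/-- The field `ℚ(q)` of rational functions. -/
abbrev KK : Type := RatFunc ℚ

/-- The indeterminate `q ∈ ℚ(q)`. -/
def qq : KK := RatFunc.X

/-- The `q`-Dolan–Grady relations defining the `q`-Onsager algebra `B_c`: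
`Σᵢ (−1)ⁱ [3 choose i]_q B₀^{3−i} B₁ B₀^i = −qc(q+q⁻¹)²(B₀B₁ − B₁B₀)` and the
same with `B₀, B₁` interchanged (here `[3 choose 1]_q = [3 choose 2]_q = q² + 1 + q⁻²`). -/
inductive qOnsRel (c : KK) : FreeAlgebra KK (Fin 2) → FreeAlgebra KK (Fin 2) → Prop
  | r0 : qOnsRel c
      (FreeAlgebra.ι KK (0 : Fin 2) ^ 3 * FreeAlgebra.ι KK (1 : Fin 2)
        - (qq ^ 2 + 1 + (qq⁻¹) ^ 2) • (FreeAlgebra.ι KK (0 : Fin 2) ^ 2 * FreeAlgebra.ι KK (1 : Fin 2) * FreeAlgebra.ι KK (0 : Fin 2))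
        + (qq ^ 2 + 1 + (qq⁻¹) ^ 2) • (FreeAlgebra.ι KK (0 : Fin 2) * FreeAlgebra.ι KK (1 : Fin 2) * FreeAlgebra.ι KK (0 : Fin 2) ^ 2)
        - FreeAlgebra.ι KK (1 : Fin 2) * FreeAlgebra.ι KK (0 : Fin 2) ^ 3)
      ((-(qq * c * (qq + qq⁻¹) ^ 2)) •
        (FreeAlgebra.ι KK (0 : Fin 2) * FreeAlgebra.ι KK (1 : Fin 2) - FreeAlgebra.ι KK (1 : Fin 2) * FreeAlgebra.ι KK (0 : Fin 2)))
  | r1 : qOnsRel c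
      (FreeAlgebra.ι KK (1 : Fin 2) ^ 3 * FreeAlgebra.ι KK (0 : Fin 2)
        - (qq ^ 2 + 1 + (qq⁻¹) ^ 2) • (FreeAlgebra.ι KK (1 : Fin 2) ^ 2 * FreeAlgebra.ι KK (0 : Fin 2) * FreeAlgebra.ι KK (1 : Fin 2))
        + (qq ^ 2 + 1 + (qq⁻¹) ^ 2) • (FreeAlgebra.ι KK (1 : Fin 2) * FreeAlgebra.ι KK (0 : Fin 2) * FreeAlgebra.ι KK (1 : Fin 2) ^ 2)
        - FreeAlgebra.ι KK (0 : Fin 2) * FreeAlgebra.ι KK (1 : Fin 2) ^ 3)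
      ((-(qq * c * (qq + qq⁻¹) ^ 2)) •
        (FreeAlgebra.ι KK (1 : Fin 2) * FreeAlgebra.ι KK (0 : Fin 2) - FreeAlgebra.ι KK (0 : Fin 2) * FreeAlgebra.ι KK (1 : Fin 2)))

/-- The `q`-Onsager algebra `B_c`. -/
abbrev QOns (c : KK) : Type := RingQuot (qOnsRel c)

/-- The generator `B₀` of `B_c`. -/
def Bo (c : KK) : QOns c := RingQuot.mkAlgHom KK (qOnsRel c) (FreeAlgebra.ι KK (0 : Fin 2))

/-- The generator `B₁` of `B_c`. -/
def Bi (c : KK) : QOns c := RingQuot.mkAlgHom KK (qOnsRel c) (FreeAlgebra.ι KK (1 : Fin 2))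

/-- `B_δ = −B₀B₁ + q⁻²B₁B₀`. -/
def Bdel (c : KK) : QOns c := -(Bo c * Bi c) + ((qq⁻¹) ^ 2) • (Bi c * Bo c)

/-- `B̃_δ = −B₁B₀ + q⁻²B₀B₁`. -/
def tBdel (c : KK) : QOns c := -(Bi c * Bo c) + ((qq⁻¹) ^ 2) • (Bo c * Bi c)

/-- The formula for `T₀(B₁)`:
`(1/(q²[2]_q c))(B₁B₀² − q[2]_q B₀B₁B₀ + q²B₀²B₁) + B₁`. -/
def T0B1val (c : KK) : QOns c :=
  (qq ^ 2 * (qq + qq⁻¹) * c)⁻¹ •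
    (Bi c * Bo c ^ 2 - (qq * (qq + qq⁻¹)) • (Bo c * Bi c * Bo c) + qq ^ 2 • (Bo c ^ 2 * Bi c))
    + Bi c

/-- The formula for `T₀⁻¹(B₁)`:
`(1/(q²[2]_q c))(B₀²B₁ − q[2]_q B₀B₁B₀ + q²B₁B₀²) + B₁`. -/
def T0invB1val (c : KK) : QOns c :=
  (qq ^ 2 * (qq + qq⁻¹) * c)⁻¹ •
    (Bo c ^ 2 * Bi c - (qq * (qq + qq⁻¹)) • (Bo c * Bi c * Bo c) + qq ^ 2 • (Bi c * Bo c ^ 2))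
    + Bi c

/-- `T₁ = Φ ∘ T₀ ∘ Φ`. -/
def T1def (c : KK) (Φ T0 : QOns c ≃ₐ[KK] QOns c) : QOns c ≃ₐ[KK] QOns c :=
  Φ.trans (T0.trans Φ)

/-- The real root vectors `B_{nδ+α₀} = (T₀Φ)ⁿ(B₀)` for `n ≥ 0`. -/
def Ba0 (c : KK) (Φ T0 : QOns c ≃ₐ[KK] QOns c) (n : ℕ) : QOns c :=
  ((⇑T0 ∘ ⇑Φ)^[n]) (Bo c)

/-- The real root vectors `B_{nδ+α₁} = (T₁⁻¹Φ)ⁿ(B₁)` for `n ≥ 0`. -/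
def Ba1 (c : KK) (Φ T0 : QOns c ≃ₐ[KK] QOns c) (n : ℕ) : QOns c :=
  ((⇑(T1def c Φ T0).symm ∘ ⇑Φ)^[n]) (Bi c)

/-- `B_{kδ+α₁}` for `k ∈ ℤ`, with the convention `B_{kδ+α₁} = B_{(−k−1)δ+α₀}` for `k < 0`. -/
def Ba1Z (c : KK) (Φ T0 : QOns c ≃ₐ[KK] QOns c) (k : ℤ) : QOns c :=
  if 0 ≤ k then Ba1 c Φ T0 k.toNat else Ba0 c Φ T0 (-k - 1).toNat

/-- `B_{kδ+α₀}` for `k ∈ ℤ`, with the convention `B_{kδ+α₀} = B_{(−k−1)δ+α₁}` for `k < 0`. -/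
def Ba0Z (c : KK) (Φ T0 : QOns c ≃ₐ[KK] QOns c) (k : ℤ) : QOns c :=
  if 0 ≤ k then Ba0 c Φ T0 k.toNat else Ba1 c Φ T0 (-k - 1).toNat

/-- `C_m = Σ_{p=0}^{m−2} B_{pδ+α₁} B_{(m−p−2)δ+α₁}` (so `C₀ = C₁ = 0`). -/
def CC (c : KK) (Φ T0 : QOns c ≃ₐ[KK] QOns c) (m : ℕ) : QOns c :=
  ∑ p ∈ Finset.range (m - 1), Ba1 c Φ T0 p * Ba1 c Φ T0 (m - 2 - p)

/-- The imaginary root vectors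
`B_{mδ} = −B₀B_{(m−1)δ+α₁} + q⁻²B_{(m−1)δ+α₁}B₀ + (q⁻²−1)C_m` for `m ≥ 1`. -/
def Bim (c : KK) (Φ T0 : QOns c ≃ₐ[KK] QOns c) (m : ℕ) : QOns c :=
  -(Bo c * Ba1 c Φ T0 (m - 1)) + ((qq⁻¹) ^ 2) • (Ba1 c Φ T0 (m - 1) * Bo c)
    + (((qq⁻¹) ^ 2 - 1)) • CC c Φ T0 m


lemma aux {K : Type*} [Field K] (q c : K) (hq : q ≠ 0) (hq2 : q + q⁻¹ ≠ 0) (hc : c ≠ 0)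
    {R : Type*} [Ring R] [Algebra K R] (a b : R)
    (hrel : a ^ 3 * b - (q ^ 2 + 1 + (q⁻¹) ^ 2) • (a ^ 2 * b * a)
      + (q ^ 2 + 1 + (q⁻¹) ^ 2) • (a * b * a ^ 2) - b * a ^ 3
      = (-(q * c * (q + q⁻¹) ^ 2)) • (a * b - b * a)) :
    -(((q ^ 2 * (q + q⁻¹) * c)⁻¹ •
        (b * a ^ 2 - (q * (q + q⁻¹)) • (a * b * a) + q ^ 2 • (a ^ 2 * b)) + b) * a)
      + ((q⁻¹) ^ 2) • (a * ((q ^ 2 * (q + q⁻¹) * c)⁻¹ •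
        (b * a ^ 2 - (q * (q + q⁻¹)) • (a * b * a) + q ^ 2 • (a ^ 2 * b)) + b))
      = -(a * b) + ((q⁻¹) ^ 2) • (b * a) := by
  have hq3 : q ^ 2 + 1 ≠ 0 := by
    intro h
    apply hq2
    field_simp
    linear_combination h
  have h4 : q ^ 3 * c + q ^ 5 * c ≠ 0 := by
    have h' := mul_ne_zero (mul_ne_zero (pow_ne_zero 3 hq) hc) hq3
    intro h; exact h' (by linear_combination h)
  have h5 : q * c + q ^ 3 * c ≠ 0 := by
    have h' := mul_ne_zero (mul_ne_zero hq hc) hq3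
    intro h; exact h' (by linear_combination h)
  have h0 : (a ^ 3 * b - (q ^ 2 + 1 + (q⁻¹) ^ 2) • (a ^ 2 * b * a)
      + (q ^ 2 + 1 + (q⁻¹) ^ 2) • (a * b * a ^ 2) - b * a ^ 3)
      - (-(q * c * (q + q⁻¹) ^ 2)) • (a * b - b * a) = 0 := sub_eq_zero.mpr hrel
  rw [← sub_eq_zero]
  have hmain : -(((q ^ 2 * (q + q⁻¹) * c)⁻¹ •
        (b * a ^ 2 - (q * (q + q⁻¹)) • (a * b * a) + q ^ 2 • (a ^ 2 * b)) + b) * a)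
      + ((q⁻¹) ^ 2) • (a * ((q ^ 2 * (q + q⁻¹) * c)⁻¹ •
        (b * a ^ 2 - (q * (q + q⁻¹)) • (a * b * a) + q ^ 2 • (a ^ 2 * b)) + b))
      - (-(a * b) + ((q⁻¹) ^ 2) • (b * a))
      = ((q ^ 2 * (q + q⁻¹) * c)⁻¹) •
        ((a ^ 3 * b - (q ^ 2 + 1 + (q⁻¹) ^ 2) • (a ^ 2 * b * a)
          + (q ^ 2 + 1 + (q⁻¹) ^ 2) • (a * b * a ^ 2) - b * a ^ 3)
          - (-(q * c * (q + q⁻¹) ^ 2)) • (a * b - b * a)) := by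
    simp only [pow_succ, pow_zero, one_mul, mul_add, add_mul, sub_mul, mul_sub, neg_mul,
      mul_neg, smul_mul_assoc, mul_smul_comm, smul_smul, smul_add, smul_sub, smul_neg,
      mul_assoc]
    match_scalars
    all_goals field_simp [hq, hc, hq3, h4, h5]
    all_goals try ring
    all_goals try (rw [show q ^ 3 * c + q ^ 5 * c = q ^ 2 * (q * c + q ^ 3 * c) from by ring, mul_inv])
    all_goals field_simp [hq, hc, hq3, h5]
    all_goals ring
  rw [hmain, h0, smul_zero]

lemma hq_ne : qq ≠ 0 := by
  simpa [qq] using RatFunc.X_ne_zero (K := ℚ)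

lemma hq2_ne : qq + qq⁻¹ ≠ 0 := by
  have h1 : qq ^ 2 + 1 ≠ 0 := by
    have : (Polynomial.X ^ 2 + 1 : Polynomial ℚ) ≠ 0 := by
      intro h
      have := congrArg (Polynomial.eval 0) h
      simp at this
    have := (RatFunc.algebraMap_ne_zero (K := ℚ) this)
    simpa [qq, map_add, map_pow, RatFunc.algebraMap_X] using this
  intro h
  apply h1
  have := congrArg (· * qq) h
  field_simp [hq_ne] at this
  linear_combination this

/-- The defining relation `r0` holds in the quotient. -/
lemma hrel0 (c : KK) :
    Bo c ^ 3 * Bi c - (qq ^ 2 + 1 + (qq⁻¹) ^ 2) • (Bo c ^ 2 * Bi c * Bo c)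
      + (qq ^ 2 + 1 + (qq⁻¹) ^ 2) • (Bo c * Bi c * Bo c ^ 2) - Bi c * Bo c ^ 3
    = (-(qq * c * (qq + qq⁻¹) ^ 2)) • (Bo c * Bi c - Bi c * Bo c) := by
  have h := RingQuot.mkAlgHom_rel KK (qOnsRel.r0 (c := c))
  simpa only [map_sub, map_add, map_smul, map_mul, map_pow, Bo, Bi] using h

lemma keyT0 (c : KK) (hc : c ≠ 0) :
    -(T0B1val c * Bo c) + ((qq⁻¹) ^ 2) • (Bo c * T0B1val c) = Bdel c := by
  unfold T0B1val Bdel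
  exact aux qq c hq_ne hq2_ne hc (Bo c) (Bi c) (hrel0 c)

/-- `T₁(B_δ) = B̃_δ` and consequently `T₀T₁(B_δ) = B_δ`, where `T₁ = Φ∘T₀∘Φ`. -/
theorem stmt7 (c : KK) (hc : c ≠ 0) (Φ T0 : QOns c ≃ₐ[KK] QOns c)
    (hΦ0 : Φ (Bo c) = Bi c) (hΦ1 : Φ (Bi c) = Bo c)
    (hT00 : T0 (Bo c) = Bo c) (hT01 : T0 (Bi c) = T0B1val c) :
    (T1def c Φ T0) (Bdel c) = tBdel c ∧ T0 ((T1def c Φ T0) (Bdel c)) = Bdel c := by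
  have hΦB : Φ (Bdel c) = tBdel c := by
    unfold Bdel tBdel
    simp [map_add, map_neg, map_mul, map_smul, hΦ0, hΦ1]
  have hT0t : T0 (tBdel c) = Bdel c := by
    unfold tBdel
    rw [map_add, map_neg, map_mul, map_smul, map_mul, hT00, hT01]
    exact keyT0 c hc
  have h1 : (T1def c Φ T0) (Bdel c) = tBdel c := by
    show Φ (T0 (Φ (Bdel c))) = tBdel c
    rw [hΦB, hT0t, hΦB]
  exact ⟨h1, by rw [h1, hT0t]⟩

end
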